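/- For every subset W ⊆ U and every integer j with 2 ≤ j ≤ p, the predicate T(W, j) holds if and only if there exists a vertex v ∈ V(C_j) such that V(C_j) ⊆ N[v] ∪ N[S'], N[v] ∩ N[S'] = ∅, N[v] ∩ U ⊆ W, and T(W ∖ N[v], j−1) holds. -/

import Mathlib

/-- The closed neighborhood `N[v]` of a vertex `v`. -/
def closedNbhd {V : Type*} (G : SimpleGraph V) (v : V) : Set V :=
  {w | G.Adj v w ∨ w = v}

/-- The closed neighborhood `N[X] = ⋃_{v ∈ X} N[v]` of a set of vertices. -/
def closedNbhdSet {V : Type*} (G : SimpleGraph V) (X : Set V) : Set V :=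
  ⋃ v ∈ X, closedNbhd G v

/-- The graph `G - S`: the graph obtained from `G` by deleting the vertices of `S`
(kept on the same vertex type; vertices of `S` become isolated). -/
def deleteSet {V : Type*} (G : SimpleGraph V) (S : Set V) : SimpleGraph V where
  Adj v w := G.Adj v w ∧ v ∉ S ∧ w ∉ S
  symm := by
    constructor
    intro v w h
    exact ⟨h.1.symm, h.2.2, h.2.1⟩
  loopless := by
    constructor
    intro v h
    exact G.loopless.irrefl v h.1

/-- The predicate `T(W, j)`: there exist vertices `v i ∈ C i` for the first `j`
clusters such that `W` is the disjoint union of the sets `N[v i] ∩ U` for `i < j`,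
and for every `i < j`, `C i ⊆ N[v i] ∪ N[S']` and `N[v i] ∩ N[S'] = ∅`. -/
def TPred {V : Type*} (G : SimpleGraph V) {p : ℕ} (C : Fin p → Set V)
    (S' U : Set V) (W : Set V) (j : ℕ) : Prop :=
  ∃ v : Fin p → V,
    (∀ i : Fin p, (i : ℕ) < j → v i ∈ C i) ∧
    (W = ⋃ (i : Fin p), ⋃ (_ : (i : ℕ) < j), (closedNbhd G (v i) ∩ U)) ∧
    (∀ i i' : Fin p, (i : ℕ) < j → (i' : ℕ) < j → i ≠ i' →
      (closedNbhd G (v i) ∩ U) ∩ (closedNbhd G (v i') ∩ U) = ∅) ∧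
    (∀ i : Fin p, (i : ℕ) < j →
      C i ⊆ closedNbhd G (v i) ∪ closedNbhdSet G S' ∧
      closedNbhd G (v i) ∩ closedNbhdSet G S' = ∅)

/-!
A witness `v` of `T(W, j)` is a witness of `T(W \ N[v_j], j - 1)` plus its last vertex `v_j`:
the pieces `N[v_i] ∩ U` are pairwise disjoint subsets of `U`, so removing `N[v_j]` from `W`
removes exactly the last piece. Conversely, a vertex for the `j`-th cluster is appended to a
witness of `T(W \ N[v], j - 1)` by updating it at index `j - 1`, which `T(·, j - 1)` ignores.
-/

theorem Fin.iUnion_val_lt_succ {α : Type*} {p k : ℕ} (hk : k < p) (f : Fin p → Set α) :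
    ⋃ (i : Fin p), ⋃ (_ : (i : ℕ) < k + 1), f i =
      (⋃ (i : Fin p), ⋃ (_ : (i : ℕ) < k), f i) ∪ f ⟨k, hk⟩ := by
  ext x
  simp only [Set.mem_union, Set.mem_iUnion, exists_prop]
  constructor
  · rintro ⟨i, hi, hx⟩
    rcases Nat.lt_succ_iff_lt_or_eq.1 hi with hi | hi
    · exact .inl ⟨i, hi, hx⟩
    · exact .inr ((Fin.ext hi : i = ⟨k, hk⟩) ▸ hx)
  · rintro (⟨i, hi, hx⟩ | hx)
    · exact ⟨i, by omega, hx⟩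
    · exact ⟨⟨k, hk⟩, Nat.lt_succ_self k, hx⟩

section TWitness

variable {V : Type*} (G : SimpleGraph V) {p : ℕ} (C : Fin p → Set V) (S' U : Set V)

def TWitness (W : Set V) (j : ℕ) (v : Fin p → V) : Prop :=
  (∀ i : Fin p, (i : ℕ) < j → v i ∈ C i) ∧
    (W = ⋃ (i : Fin p), ⋃ (_ : (i : ℕ) < j), (closedNbhd G (v i) ∩ U)) ∧
    (∀ i i' : Fin p, (i : ℕ) < j → (i' : ℕ) < j → i ≠ i' →
      (closedNbhd G (v i) ∩ U) ∩ (closedNbhd G (v i') ∩ U) = ∅) ∧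
    (∀ i : Fin p, (i : ℕ) < j →
      C i ⊆ closedNbhd G (v i) ∪ closedNbhdSet G S' ∧
      closedNbhd G (v i) ∩ closedNbhdSet G S' = ∅)

variable {G C S' U}

theorem tPred_iff_exists_tWitness {W : Set V} {j : ℕ} :
    TPred G C S' U W j ↔ ∃ v, TWitness G C S' U W j v :=
  Iff.rfl

theorem TWitness.congr {W : Set V} {j : ℕ} {u u' : Fin p → V}
    (h : ∀ i : Fin p, (i : ℕ) < j → u i = u' i) (hu : TWitness G C S' U W j u) :
    TWitness G C S' U W j u' := by
  obtain ⟨hmem, hW, hdisj, hcov⟩ := hu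
  refine ⟨fun i hi => h i hi ▸ hmem i hi, ?_,
    fun i i' hi hi' hne => h i hi ▸ h i' hi' ▸ hdisj i i' hi hi' hne,
    fun i hi => h i hi ▸ hcov i hi⟩
  rw [hW]
  exact Set.iUnion_congr fun i => Set.iUnion_congr_Prop Iff.rfl fun hi => by rw [h i hi]

theorem tWitness_succ_iff {W : Set V} {k : ℕ} (hk : k < p) {v : Fin p → V} (hWU : W ⊆ U) :
    TWitness G C S' U W (k + 1) v ↔
      v ⟨k, hk⟩ ∈ C ⟨k, hk⟩ ∧
        C ⟨k, hk⟩ ⊆ closedNbhd G (v ⟨k, hk⟩) ∪ closedNbhdSet G S' ∧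
        closedNbhd G (v ⟨k, hk⟩) ∩ closedNbhdSet G S' = ∅ ∧
        closedNbhd G (v ⟨k, hk⟩) ∩ U ⊆ W ∧
        TWitness G C S' U (W \ closedNbhd G (v ⟨k, hk⟩)) k v := by
  set N := closedNbhd G (v ⟨k, hk⟩)
  have hlt_succ : ∀ i : Fin p, (i : ℕ) < k + 1 → (i : ℕ) < k ∨ i = ⟨k, hk⟩ := fun i hi =>
    (Nat.lt_succ_iff_lt_or_eq.1 hi).imp_right Fin.ext
  constructor
  · rintro ⟨hmem, hW, hdisj, hcov⟩
    have hkk := Nat.lt_succ_self k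
    refine ⟨hmem _ hkk, (hcov _ hkk).1, (hcov _ hkk).2, ?_, fun i hi => hmem i (by omega), ?_,
      fun i i' hi hi' => hdisj i i' (by omega) (by omega), fun i hi => hcov i (by omega)⟩
    · rw [hW, Fin.iUnion_val_lt_succ hk]
      exact Set.subset_union_right
    · rw [hW, Fin.iUnion_val_lt_succ hk, Set.union_sdiff_distrib,
        Set.sdiff_eq_empty.2 Set.inter_subset_left, Set.union_empty, sdiff_eq_left]
      refine Set.disjoint_iUnion_left.2 fun i => Set.disjoint_iUnion_left.2 fun hi => ?_
      -- a piece inside `U` meeting `N` would meet the last piece `N ∩ U`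
      refine Set.disjoint_left.2 fun x hx hxN => ?_
      exact (Set.eq_empty_iff_forall_notMem.1 (hdisj i _ (by omega) hkk (Fin.ne_of_lt hi)) x)
        ⟨hx, hxN, hx.2⟩
  · rintro ⟨hmemk, hcovk, hdisjk, hsub, hmem, hW, hdisj, hcov⟩
    have hrest : ∀ i : Fin p, (i : ℕ) < k → closedNbhd G (v i) ∩ U ⊆ W \ N := fun i hi => by
      rw [hW]
      exact fun x hx => Set.mem_iUnion₂.2 ⟨i, hi, hx⟩
    have hrest_disj : ∀ i : Fin p, (i : ℕ) < k →
        closedNbhd G (v i) ∩ U ∩ (N ∩ U) = ∅ := fun i hi =>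
      Set.eq_empty_iff_forall_notMem.2 fun x hx => (hrest i hi hx.1).2 hx.2.1
    refine ⟨fun i hi => ?_, ?_, fun i i' hi hi' hii' => ?_, fun i hi => ?_⟩
    · rcases hlt_succ i hi with hi | rfl
      exacts [hmem i hi, hmemk]
    · have hWN : W ∩ N = N ∩ U :=
        Set.Subset.antisymm (fun x hx => ⟨hx.2, hWU hx.1⟩) fun x hx => ⟨hsub hx, hx.1⟩
      rw [Fin.iUnion_val_lt_succ hk, ← hW, ← hWN, Set.sdiff_union_inter]
    · rcases hlt_succ i hi with hi | rfl <;> rcases hlt_succ i' hi' with hi' | rfl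
      · exact hdisj i i' hi hi' hii'
      · exact hrest_disj i hi
      · exact Set.inter_comm _ _ ▸ hrest_disj i' hi'
      · exact absurd rfl hii'
    · rcases hlt_succ i hi with hi | rfl
      exacts [hcov i hi, ⟨hcovk, hdisjk⟩]

end TWitness

theorem tpred_recurrence {V : Type*} (G : SimpleGraph V)
    (p : ℕ) (S' U : Set V) (C : Fin p → Set V)
    (W : Set V) (hW : W ⊆ U) (j : ℕ) (hj2 : 2 ≤ j) (hjp : j ≤ p) :
    TPred G C S' U W j ↔
      ∃ v ∈ C ⟨j - 1, by omega⟩,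
        C ⟨j - 1, by omega⟩ ⊆ closedNbhd G v ∪ closedNbhdSet G S' ∧
        closedNbhd G v ∩ closedNbhdSet G S' = ∅ ∧
        closedNbhd G v ∩ U ⊆ W ∧
        TPred G C S' U (W \ closedNbhd G v) (j - 1) := by
  obtain ⟨k, rfl⟩ : ∃ k, j = k + 1 := ⟨j - 1, by omega⟩
  have hk : k < p := by omega
  simp only [Nat.add_sub_cancel, tPred_iff_exists_tWitness, tWitness_succ_iff hk hW]
  constructor
  · rintro ⟨v, hvC, hcov, hdisj, hsub, hrest⟩
    exact ⟨v ⟨k, hk⟩, hvC, hcov, hdisj, hsub, v, hrest⟩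
  · rintro ⟨v, hvC, hcov, hdisj, hsub, u, hrest⟩
    refine ⟨Function.update u ⟨k, hk⟩ v, ?_⟩
    rw [Function.update_self]
    refine ⟨hvC, hcov, hdisj, hsub, hrest.congr fun i hi => ?_⟩
    exact (Function.update_of_ne (Fin.ne_of_lt hi) _ _).symm
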